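/- arXiv:1505.05598 — 3 statements merged into one kernel-verified Lean document; each statement's English description precedes it below -/
import Mathlib

section
/- Let s ≥ 2 be an integer and let G be a connected simple graph on a finite vertex set U with |U| = 2s − 1. Let A and B be spanning subgraphs of G (graphs on the same vertex set U with edges among those of G) such that every edge of G is an edge of A or an edge of B, and such that both A and B have at least s connected components. If u ∈ U is a vertex such that the singleton {u} is not a connected component of A and not a connected component of B, then the graph G − u obtained by deleting u from G is disconnected. -/
open SimpleGraph

private lemma cc_mono {V : Type*} [Finite V] {H K : SimpleGraph V} (h : H ≤ K) :
    Nat.card K.ConnectedComponent ≤ Nat.card H.ConnectedComponent := by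
  have hsurj : Function.Surjective
      (SimpleGraph.ConnectedComponent.map (SimpleGraph.Hom.ofLE h)) := by
    intro c
    obtain ⟨v, rfl⟩ := c.exists_rep
    exact ⟨H.connectedComponentMk v, rfl⟩
  exact Nat.card_le_card_of_surjective _ hsurj

private lemma cc_sup_card {V : Type*} [Fintype V] (H K : SimpleGraph V) :
    Nat.card H.ConnectedComponent + Nat.card K.ConnectedComponent ≤
      Nat.card (H ⊔ K).ConnectedComponent + Fintype.card V := by
  classical
  set pH := LinearMap.ker (Matrix.toLin' (H.lapMatrix ℝ)) with hpH
  set pK := LinearMap.ker (Matrix.toLin' (K.lapMatrix ℝ)) with hpK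
  set pS := LinearMap.ker (Matrix.toLin' ((H ⊔ K).lapMatrix ℝ)) with hpS
  have hinf : pH ⊓ pK = pS := by
    ext x
    simp only [Submodule.mem_inf, hpH, hpK, hpS, LinearMap.mem_ker,
      Matrix.toLin'_apply, lapMatrix_mulVec_eq_zero_iff_forall_adj, sup_adj]
    constructor
    · rintro ⟨h1, h2⟩ i j (h | h)
      · exact h1 i j h
      · exact h2 i j h
    · exact fun h => ⟨fun i j hij => h i j (Or.inl hij), fun i j hij => h i j (Or.inr hij)⟩
  have hH : Nat.card H.ConnectedComponent = Module.finrank ℝ pH := by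
    rw [Nat.card_eq_fintype_card, H.card_connectedComponent_eq_finrank_ker_toLin'_lapMatrix]
  have hK : Nat.card K.ConnectedComponent = Module.finrank ℝ pK := by
    rw [Nat.card_eq_fintype_card, K.card_connectedComponent_eq_finrank_ker_toLin'_lapMatrix]
  have hS : Nat.card (H ⊔ K).ConnectedComponent = Module.finrank ℝ pS := by
    rw [Nat.card_eq_fintype_card, (H ⊔ K).card_connectedComponent_eq_finrank_ker_toLin'_lapMatrix]
  have key := Submodule.finrank_sup_add_finrank_inf_eq pH pK
  have hle : Module.finrank ℝ ↥(pH ⊔ pK) ≤ Fintype.card V := by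
    have := Submodule.finrank_le (pH ⊔ pK)
    rwa [Module.finrank_pi ℝ] at this
  rw [hH, hK, hS, ← key, hinf]
  omega

/-- Second half of the proof of Lemma 3.4: if `G` is a connected graph on
`2s-1` vertices covered by two spanning subgraphs `A`, `B`, each with at
least `s` connected components, and `u` is a vertex that is not isolated in
`A` nor in `B` (i.e. `{u}` is not a connected component of either), then
deleting `u` disconnects `G`. -/
theorem stmt_1 {V : Type*} [Fintype V] (s : ℕ) (hs : 2 ≤ s)
    (hcard : Fintype.card V = 2 * s - 1)
    (G A B : SimpleGraph V) (hG : G.Connected)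
    (hA : A ≤ G) (hB : B ≤ G) (hAB : G ≤ A ⊔ B)
    (hcA : s ≤ Nat.card A.ConnectedComponent)
    (hcB : s ≤ Nat.card B.ConnectedComponent)
    (u : V) (huA : ∃ w, A.Adj u w) (huB : ∃ w, B.Adj u w) :
    ¬ (G.induce {v | v ≠ u}).Connected := by
  classical
  intro hconn
  set W : Set V := {v | v ≠ u} with hW
  -- cardinality of W
  have hcardW : Fintype.card W = 2 * s - 2 := by
    have h1 : Fintype.card W = Fintype.card {v : V // ¬ (v = u)} :=
      Fintype.card_congr (Equiv.subtypeEquivRight (by simp [hW]))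
    rw [h1, Fintype.card_subtype_compl, Fintype.card_subtype_eq]
    omega
  -- component count doesn't drop after deleting a non-isolated vertex
  have hdel : ∀ (H : SimpleGraph V), (∃ w, H.Adj u w) →
      Nat.card H.ConnectedComponent ≤ Nat.card (H.induce W).ConnectedComponent := by
    intro H ⟨w, hw⟩
    have hwW : w ∈ W := fun hwu => H.loopless.irrefl u (hwu ▸ hw)
    have hsurj : Function.Surjective
        (SimpleGraph.ConnectedComponent.map (SimpleGraph.Embedding.induce W (G := H)).toHom) := by
      intro c
      obtain ⟨v, rfl⟩ := c.exists_rep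
      by_cases hv : v ∈ W
      · exact ⟨(H.induce W).connectedComponentMk ⟨v, hv⟩, rfl⟩
      · have hvu : v = u := not_not.mp hv
        refine ⟨(H.induce W).connectedComponentMk ⟨w, hwW⟩, ?_⟩
        simp only [SimpleGraph.ConnectedComponent.map_mk]
        exact SimpleGraph.ConnectedComponent.sound (hvu ▸ (H.adj_symm hw).reachable)
    exact Nat.card_le_card_of_surjective _ hsurj
  have hAW : s ≤ Nat.card (A.induce W).ConnectedComponent := le_trans hcA (hdel A huA)
  have hBW : s ≤ Nat.card (B.induce W).ConnectedComponent := le_trans hcB (hdel B huB)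
  -- the induced G is at most the sup of induced A, B
  have hle : G.induce W ≤ A.induce W ⊔ B.induce W := by
    intro a b hab
    have := hAB hab
    rw [sup_adj] at this ⊢
    exact this
  -- connected graph has one component
  have hone : Nat.card (G.induce W).ConnectedComponent = 1 := by
    rw [Nat.card_eq_one_iff_unique]
    refine ⟨⟨fun a b => ?_⟩, hconn.nonempty.map (G.induce W).connectedComponentMk⟩
    obtain ⟨v, rfl⟩ := a.exists_rep
    obtain ⟨w, rfl⟩ := b.exists_rep
    exact SimpleGraph.ConnectedComponent.sound (hconn.preconnected v w)
  have hsupone : Nat.card (A.induce W ⊔ B.induce W).ConnectedComponent ≤ 1 :=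
    hone ▸ cc_mono hle
  have := cc_sup_card (A.induce W) (B.induce W)
  rw [hcardW] at this
  omega
end

section
/- Let d ≥ 1 and 1 ≤ i ≤ d be integers. The number of subsets σ of (Fin 3) × (Fin d) such that |σ| = i, the second coordinates of the elements of σ are pairwise distinct, and the set of first coordinates of the elements of σ has at most two elements, equals 3(2^i − 1)·C(d, i), where C(d,i) is the binomial coefficient. -/
private lemma fin3_exists_rep : ∀ C : Finset (Fin 3), C.Nonempty → C.card ≤ 2 →
    ∃ c : Fin 3, c + 1 ∈ C ∧ C ⊆ {c, c + 1} := by decide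

private lemma fin3_succ_ne : ∀ c : Fin 3, c + 1 ≠ c := by decide

private lemma fin3_no2cycle : ∀ c c' : Fin 3, c + 1 = c' → c' + 1 = c → False := by decide

section
variable {d i : ℕ} (S : Finset (Fin d))

private def gfun (c : Fin 3) (T : Finset (Fin d)) : Finset (Fin 3 × Fin d) :=
  S.image (fun x => (if x ∈ T then c + 1 else c, x))

private lemma mem_gfun {c : Fin 3} {T : Finset (Fin d)} {p : Fin 3 × Fin d} :
    p ∈ gfun S c T ↔ p.2 ∈ S ∧ p.1 = (if p.2 ∈ T then c + 1 else c) := by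
  simp only [gfun, Finset.mem_image]
  constructor
  · rintro ⟨x, hx, rfl⟩; exact ⟨hx, rfl⟩
  · rintro ⟨h1, h2⟩; exact ⟨p.2, h1, by rw [← h2]⟩

private lemma gfun_card (c : Fin 3) (T : Finset (Fin d)) : (gfun S c T).card = S.card := by
  apply Finset.card_image_of_injOn
  intro x _ y _ h
  exact congrArg Prod.snd h

private lemma fiber_card (hi : 1 ≤ i) (hS : S.card = i) :
    ((Finset.univ : Finset (Finset (Fin 3 × Fin d))).filter
      (fun σ => (σ.card = i ∧
        (∀ a ∈ σ, ∀ b ∈ σ, a.2 = b.2 → a = b) ∧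
        (σ.image Prod.fst).card ≤ 2) ∧ σ.image Prod.snd = S)).card
    = 3 * (2 ^ i - 1) := by
  have key : ((Finset.univ : Finset (Fin 3)) ×ˢ (S.powerset.erase ∅)).card
      = ((Finset.univ : Finset (Finset (Fin 3 × Fin d))).filter
      (fun σ => (σ.card = i ∧
        (∀ a ∈ σ, ∀ b ∈ σ, a.2 = b.2 → a = b) ∧
        (σ.image Prod.fst).card ≤ 2) ∧ σ.image Prod.snd = S)).card := by
    apply Finset.card_bij (fun p _ => gfun S p.1 p.2)
    · -- maps into
      rintro ⟨c, T⟩ hp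
      simp only [Finset.mem_product, Finset.mem_erase, Finset.mem_powerset] at hp
      obtain ⟨-, hTne, hTS⟩ := hp
      have hinj : ∀ a ∈ gfun S c T, ∀ b ∈ gfun S c T, a.2 = b.2 → a = b := by
        intro a ha b hb hab
        rw [mem_gfun] at ha hb
        exact Prod.ext (by rw [ha.2, hb.2, hab]) hab
      have hsnd : (gfun S c T).image Prod.snd = S := by
        apply Finset.Subset.antisymm
        · intro x hx
          simp only [Finset.mem_image] at hx
          obtain ⟨p, hp, rfl⟩ := hx
          exact ((mem_gfun S).1 hp).1
        · intro x hx
          simp only [Finset.mem_image]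
          exact ⟨(if x ∈ T then c + 1 else c, x), (mem_gfun S).2 ⟨hx, rfl⟩, rfl⟩
      refine Finset.mem_filter.2 ⟨Finset.mem_univ _, ⟨⟨?_, hinj, ?_⟩, hsnd⟩⟩
      · rw [gfun_card, hS]
      · calc ((gfun S c T).image Prod.fst).card ≤ ({c, c + 1} : Finset (Fin 3)).card := by
              apply Finset.card_le_card
              intro a ha
              simp only [Finset.mem_image] at ha
              obtain ⟨p, hp, rfl⟩ := ha
              have := ((mem_gfun S).1 hp).2
              simp only [Finset.mem_insert, Finset.mem_singleton]
              split at this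
              · right; exact this
              · left; exact this
          _ ≤ 2 := Finset.card_insert_le _ _ |>.trans (by simp)
    · -- injective
      rintro ⟨c, T⟩ hp ⟨c', T'⟩ hp' heq
      simp only [Finset.mem_product, Finset.mem_erase, Finset.mem_powerset] at hp hp'
      obtain ⟨-, hTne, hTS⟩ := hp
      obtain ⟨-, hTne', hTS'⟩ := hp'
      have hpt : ∀ x ∈ S, (if x ∈ T then c + 1 else c) = (if x ∈ T' then c' + 1 else c') := by
        intro x hx
        have h1 : ((if x ∈ T then c + 1 else c), x) ∈ gfun S c T :=
          (mem_gfun S).2 ⟨hx, rfl⟩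
        rw [heq, mem_gfun] at h1
        exact h1.2
      obtain ⟨x0, hx0⟩ := Finset.nonempty_iff_ne_empty.2 hTne
      obtain ⟨x1, hx1⟩ := Finset.nonempty_iff_ne_empty.2 hTne'
      have h0 := hpt x0 (hTS hx0)
      have h1 := hpt x1 (hTS' hx1)
      rw [if_pos hx0] at h0
      rw [if_pos hx1] at h1
      have hcc : c = c' := by
        by_cases hx0' : x0 ∈ T'
        · rw [if_pos hx0'] at h0; exact add_right_cancel h0
        · rw [if_neg hx0'] at h0
          by_cases hx1' : x1 ∈ T
          · rw [if_pos hx1'] at h1; exact add_right_cancel h1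
          · rw [if_neg hx1'] at h1
            exact (fin3_no2cycle c c' h0 h1.symm).elim
      subst hcc
      have hTT : T = T' := by
        ext x
        constructor
        · intro hx
          have := hpt x (hTS hx)
          rw [if_pos hx] at this
          by_contra hx'
          rw [if_neg hx'] at this
          exact fin3_succ_ne c this
        · intro hx
          have := hpt x (hTS' hx)
          rw [if_pos hx] at this
          by_contra hx'
          rw [if_neg hx'] at this
          exact fin3_succ_ne c this.symm
      rw [hTT]
    · -- surjective
      intro σ hσ
      simp only [Finset.mem_filter] at hσ
      obtain ⟨-, ⟨hcard, hinj, hfst⟩, hsnd⟩ := hσ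
      have hne : σ.Nonempty := Finset.card_pos.1 (by omega)
      have hCne : (σ.image Prod.fst).Nonempty := hne.image _
      obtain ⟨c, hc1, hc2⟩ := fin3_exists_rep (σ.image Prod.fst) hCne hfst
      set T : Finset (Fin d) := (σ.filter (fun p => p.1 = c + 1)).image Prod.snd with hTdef
      have hTS : T ⊆ S := by
        rw [← hsnd]
        exact Finset.image_subset_image (Finset.filter_subset _ _)
      have hTne : T ≠ ∅ := by
        simp only [Finset.mem_image] at hc1
        obtain ⟨p, hp, hpc⟩ := hc1
        apply Finset.nonempty_iff_ne_empty.1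
        exact ⟨p.2, Finset.mem_image_of_mem _ (Finset.mem_filter.2 ⟨hp, hpc⟩)⟩
      refine ⟨(c, T), Finset.mem_product.2 ⟨Finset.mem_univ _,
        Finset.mem_erase.2 ⟨hTne, Finset.mem_powerset.2 hTS⟩⟩, ?_⟩
      -- gfun S c T = σ
      have hsub : σ ⊆ gfun S c T := by
        intro p hp
        rw [mem_gfun]
        refine ⟨hsnd ▸ Finset.mem_image_of_mem _ hp, ?_⟩
        by_cases hpt : p.2 ∈ T
        · rw [if_pos hpt]
          simp only [hTdef, Finset.mem_image, Finset.mem_filter] at hpt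
          obtain ⟨q, ⟨hq, hqc⟩, hq2⟩ := hpt
          have := hinj q hq p hp hq2
          rw [← this, hqc]
        · rw [if_neg hpt]
          have hpc : p.1 ∈ ({c, c + 1} : Finset (Fin 3)) := hc2 (Finset.mem_image_of_mem _ hp)
          simp only [Finset.mem_insert, Finset.mem_singleton] at hpc
          rcases hpc with h | h
          · exact h
          · exact absurd (Finset.mem_image_of_mem Prod.snd
              (Finset.mem_filter.2 ⟨hp, h⟩)) hpt
      exact (Finset.eq_of_subset_of_card_le hsub (by rw [gfun_card, hS, hcard])).symm
  rw [← key, Finset.card_product, Finset.card_univ, Fintype.card_fin,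
    Finset.card_erase_of_mem (Finset.empty_mem_powerset S), Finset.card_powerset, hS]

end

/-- Lemma 3.1 (count of `(i-1)`-faces of `BM_d`): the number of `i`-element
subsets of `(Fin 3) × (Fin d)` with pairwise distinct second coordinates and
at most two distinct first coordinates is `3(2^i - 1) * C(d, i)`. -/
theorem stmt_4 (d i : ℕ) (hd : 1 ≤ d) (hi : 1 ≤ i) (hid : i ≤ d) :
    ((Finset.univ : Finset (Finset (Fin 3 × Fin d))).filter
      (fun σ => σ.card = i ∧
        (∀ a ∈ σ, ∀ b ∈ σ, a.2 = b.2 → a = b) ∧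
        (σ.image Prod.fst).card ≤ 2)).card
    = 3 * (2 ^ i - 1) * Nat.choose d i := by
  rw [Finset.card_eq_sum_card_fiberwise (f := fun σ => σ.image Prod.snd)
    (t := (Finset.univ : Finset (Fin d)).powersetCard i) ?_]
  · have hfib : ∀ S ∈ (Finset.univ : Finset (Fin d)).powersetCard i,
        (Finset.filter (fun σ : Finset (Fin 3 × Fin d) => σ.image Prod.snd = S)
          ((Finset.univ : Finset (Finset (Fin 3 × Fin d))).filter
          (fun σ => σ.card = i ∧
            (∀ a ∈ σ, ∀ b ∈ σ, a.2 = b.2 → a = b) ∧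
            (σ.image Prod.fst).card ≤ 2))).card = 3 * (2 ^ i - 1) := by
      intro S hS
      have hS' : S.card = i := (Finset.mem_powersetCard.1 hS).2
      rw [← fiber_card S hi hS']
      congr 1
      ext σ
      simp only [Finset.mem_filter, Finset.mem_univ, true_and]
    rw [Finset.sum_congr rfl hfib, Finset.sum_const,
      Finset.card_powersetCard, Finset.card_univ, Fintype.card_fin, smul_eq_mul, mul_comm]
  · intro σ hσ
    simp only [Finset.mem_coe, Finset.mem_filter, Finset.mem_univ, true_and] at hσ
    obtain ⟨hcard, hinj, -⟩ := hσ
    rw [Finset.mem_coe, Finset.mem_powersetCard]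
    refine ⟨Finset.subset_univ _, ?_⟩
    rw [Finset.card_image_of_injOn, hcard]
    intro a ha b hb hab
    exact hinj a ha b hb hab
end

section
/- Let d ≥ 2 and let Δ be a pure (d−1)-dimensional simplicial complex on a finite vertex set V such that every face of cardinality d−1 is contained in exactly two facets. Let v₁, v₂, v₃ ∈ V be three distinct vertices such that every facet of Δ contains exactly one of v₁, v₂, v₃, and set V₁ = {v₁, v₂, v₃}. Then for every pair of distinct indices i, j ∈ {1,2,3}, the union lk_Δ v_i ∪ lk_Δ v_j equals Δ∖V₁; that is, a subset σ ⊆ V is a face of Δ disjoint from V₁ if and only if σ ∪ {v_i} ∈ Δ or σ ∪ {v_j} ∈ Δ. -/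
/-- Structural fact used at the start of the proof of Theorem 3.6: for a pure
`(d-1)`-dimensional complex in which every `(d-2)`-face lies in exactly two
facets and every facet contains exactly one of the three distinct vertices
`v₁, v₂, v₃`, one has `lk_Δ v_i ∪ lk_Δ v_j = Δ \ {v₁, v₂, v₃}` for every pair
of distinct indices `i, j`. -/
theorem stmt_7 {V : Type*} [Fintype V] [DecidableEq V]
    (d : ℕ) (hd : 2 ≤ d) (Δ : Finset (Finset V))
    (hdc : ∀ σ ∈ Δ, ∀ τ ⊆ σ, τ ∈ Δ)
    -- purity: every facet has cardinality `d` ...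
    (hpure : ∀ σ ∈ Δ, (∀ τ ∈ Δ, σ ⊆ τ → σ = τ) → σ.card = d)
    -- ... and every face is contained in a facet
    (hfacet : ∀ σ ∈ Δ, ∃ τ ∈ Δ, σ ⊆ τ ∧ (∀ ρ ∈ Δ, τ ⊆ ρ → τ = ρ))
    -- every face of cardinality `d-1` is contained in exactly two facets
    (hridge : ∀ σ ∈ Δ, σ.card = d - 1 →
      (Δ.filter (fun τ => (∀ ρ ∈ Δ, τ ⊆ ρ → τ = ρ) ∧ σ ⊆ τ)).card = 2)
    (v₁ v₂ v₃ : V) (h12 : v₁ ≠ v₂) (h13 : v₁ ≠ v₃) (h23 : v₂ ≠ v₃)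
    -- every facet contains exactly one of `v₁, v₂, v₃`
    (hcolor : ∀ σ ∈ Δ, (∀ τ ∈ Δ, σ ⊆ τ → σ = τ) →
      (σ ∩ ({v₁, v₂, v₃} : Finset V)).card = 1) :
    ∀ a ∈ ({v₁, v₂, v₃} : Finset V), ∀ b ∈ ({v₁, v₂, v₃} : Finset V), a ≠ b →
      ∀ σ : Finset V,
        (σ ∈ Δ ∧ σ ∩ ({v₁, v₂, v₃} : Finset V) = ∅) ↔
        ((a ∉ σ ∧ insert a σ ∈ Δ) ∨ (b ∉ σ ∧ insert b σ ∈ Δ)) := by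
  set S : Finset V := {v₁, v₂, v₃} with hS
  -- helper: if c ∈ S, c ∉ σ and insert c σ ∈ Δ then σ ∈ Δ and σ ∩ S = ∅
  have key : ∀ c ∈ S, ∀ σ : Finset V, c ∉ σ → insert c σ ∈ Δ →
      σ ∈ Δ ∧ σ ∩ S = ∅ := by
    intro c hc σ hcσ hins
    refine ⟨hdc _ hins σ (Finset.subset_insert c σ), ?_⟩
    obtain ⟨τ, hτ, hsub, hmax⟩ := hfacet _ hins
    have hone := hcolor τ hτ hmax
    have hcmem : c ∈ τ ∩ S := Finset.mem_inter.2 ⟨hsub (Finset.mem_insert_self c σ), hc⟩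
    have heq : τ ∩ S = {c} := by
      apply Finset.eq_singleton_iff_unique_mem.2
      refine ⟨hcmem, fun x hx => ?_⟩
      have := Finset.card_eq_one.1 hone
      obtain ⟨y, hy⟩ := this
      rw [hy] at hx hcmem
      rw [Finset.mem_singleton] at hx hcmem
      rw [hx, hcmem]
    rw [Finset.eq_empty_iff_forall_notMem]
    intro x hx
    have hxτ : x ∈ τ ∩ S := by
      rw [Finset.mem_inter] at hx ⊢
      exact ⟨hsub (Finset.mem_insert_of_mem hx.1), hx.2⟩
    rw [heq, Finset.mem_singleton] at hxτ
    exact hcσ (hxτ ▸ (Finset.mem_inter.1 hx).1)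
  intro a ha b hb hab σ
  constructor
  · rintro ⟨hσ, hdisj⟩
    obtain ⟨τ, hτ, hsub, hmax⟩ := hfacet σ hσ
    have hone := hcolor τ hτ hmax
    obtain ⟨c, hc⟩ := Finset.card_eq_one.1 hone
    have hcS : c ∈ S := (Finset.mem_inter.1 (hc ▸ Finset.mem_singleton_self c)).2
    have hcτ : c ∈ τ := (Finset.mem_inter.1 (hc ▸ Finset.mem_singleton_self c)).1
    have hcσ : c ∉ σ := by
      intro h
      have : c ∈ σ ∩ S := Finset.mem_inter.2 ⟨h, hcS⟩
      rw [hdisj] at this; exact absurd this (Finset.notMem_empty c)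
    by_cases hca : c = a
    · left
      exact ⟨hca ▸ hcσ, hdc τ hτ _ (Finset.insert_subset (hca ▸ hcτ) hsub)⟩
    by_cases hcb : c = b
    · right
      exact ⟨hcb ▸ hcσ, hdc τ hτ _ (Finset.insert_subset (hcb ▸ hcτ) hsub)⟩
    -- c is the third color; pass to the other facet through τ.erase c
    have hτcard : τ.card = d := hpure τ hτ hmax
    have hρ : τ.erase c ∈ Δ := hdc τ hτ _ (Finset.erase_subset c τ)
    have hρcard : (τ.erase c).card = d - 1 := by
      rw [Finset.card_erase_of_mem hcτ, hτcard]
    have h2 := hridge _ hρ hρcard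
    have hτmem : τ ∈ Δ.filter (fun τ' => (∀ ρ ∈ Δ, τ' ⊆ ρ → τ' = ρ) ∧ τ.erase c ⊆ τ') :=
      Finset.mem_filter.2 ⟨hτ, hmax, Finset.erase_subset c τ⟩
    obtain ⟨τ', hτ'mem, hτ'ne⟩ :=
      Finset.exists_mem_ne (by omega : 1 <
        (Δ.filter (fun τ' => (∀ ρ ∈ Δ, τ' ⊆ ρ → τ' = ρ) ∧ τ.erase c ⊆ τ')).card) τ
    rw [Finset.mem_filter] at hτ'mem
    obtain ⟨hτ'Δ, hτ'max, hτ'sup⟩ := hτ'mem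
    have hcτ' : c ∉ τ' := by
      intro h
      apply hτ'ne
      have hsub' : τ ⊆ τ' := by
        intro x hx
        by_cases hxc : x = c
        · exact hxc ▸ h
        · exact hτ'sup (Finset.mem_erase.2 ⟨hxc, hx⟩)
      exact (hmax τ' hτ'Δ hsub').symm
    have hone' := hcolor τ' hτ'Δ hτ'max
    obtain ⟨c', hc'⟩ := Finset.card_eq_one.1 hone'
    have hc'S : c' ∈ S := (Finset.mem_inter.1 (hc' ▸ Finset.mem_singleton_self c')).2
    have hc'τ' : c' ∈ τ' := (Finset.mem_inter.1 (hc' ▸ Finset.mem_singleton_self c')).1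
    have hc'c : c' ≠ c := fun h => hcτ' (h ▸ hc'τ')
    -- S = {a, b, c}
    have hScard : S.card = 3 := by
      rw [hS]
      rw [Finset.card_insert_of_notMem (by simp [h12, h13]),
        Finset.card_insert_of_notMem (by simp [h23])]
      rfl
    have habc : ({a, b, c} : Finset V) ⊆ S := by
      intro x hx
      rcases Finset.mem_insert.1 hx with h | hx
      · exact h ▸ ha
      rcases Finset.mem_insert.1 hx with h | hx
      · exact h ▸ hb
      · exact (Finset.mem_singleton.1 hx) ▸ hcS
    have habccard : ({a, b, c} : Finset V).card = 3 := by
      rw [Finset.card_insert_of_notMem (by simp [hab, Ne.symm hca]),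
        Finset.card_insert_of_notMem (by simp [Ne.symm hcb])]
      rfl
    have hSeq : S = {a, b, c} :=
      (Finset.eq_of_subset_of_card_le habc (by omega)).symm
    have hc'ab : c' = a ∨ c' = b := by
      have := hSeq ▸ hc'S
      rcases Finset.mem_insert.1 this with h | h
      · exact Or.inl h
      rcases Finset.mem_insert.1 h with h | h
      · exact Or.inr h
      · exact absurd (Finset.mem_singleton.1 h) hc'c
    have hc'σ : c' ∉ σ := by
      intro h
      have : c' ∈ σ ∩ S := Finset.mem_inter.2 ⟨h, hc'S⟩
      rw [hdisj] at this; exact absurd this (Finset.notMem_empty c')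
    have hστ' : σ ⊆ τ' := fun x hx =>
      hτ'sup (Finset.mem_erase.2 ⟨fun h => hcσ (h ▸ hx), hsub hx⟩)
    have hins : insert c' σ ∈ Δ :=
      hdc τ' hτ'Δ _ (Finset.insert_subset hc'τ' hστ')
    rcases hc'ab with h | h
    · exact Or.inl ⟨h ▸ hc'σ, h ▸ hins⟩
    · exact Or.inr ⟨h ▸ hc'σ, h ▸ hins⟩
  · rintro (⟨h1, h2⟩ | ⟨h1, h2⟩)
    · exact key a ha σ h1 h2
    · exact key b hb σ h1 h2
end
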